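/- (Fatou's lemma for the pan-integral) Let (X, 𝒜, μ) be a monotone measure space with μ continuous from below, let E ∈ 𝒜, and let f_k : E → [0, ∞] be a sequence of measurable functions. Then ∫_E^pan (liminf_{k→∞} f_k) dμ ≤ liminf_{k→∞} ∫_E^pan f_k dμ. -/

import Mathlib

open Set Filter
open scoped ENNReal NNReal Topology

variable {X : Type*}

/-- A monotone measure: vanishes on the empty set, positive on the whole space,
and monotone on measurable sets. -/
structure MonotoneMeasure [MeasurableSpace X] (mu : Set X → ℝ≥0∞) : Prop where
  empty : mu ∅ = 0
  univ_pos : 0 < mu Set.univ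
  mono : ∀ ⦃A B : Set X⦄, MeasurableSet A → MeasurableSet B → A ⊆ B → mu A ≤ mu B

/-- A finite measurable partition of `X`. -/
def IsPanPartition [MeasurableSpace X] {n : ℕ} (A : Fin n → Set X) : Prop :=
  (∀ i, MeasurableSet (A i)) ∧ Pairwise (Function.onFun Disjoint A) ∧ (⋃ i, A i) = Set.univ

/-- The `(+,·)`-based pan-integral of a nonnegative function on `X`. -/
noncomputable def panIntegral [MeasurableSpace X] (mu : Set X → ℝ≥0∞) (f : X → ℝ≥0∞) : ℝ≥0∞ :=
  ⨆ (n : ℕ) (A : Fin n → Set X) (_ : IsPanPartition A) (lam : Fin n → ℝ≥0)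
    (_ : ∀ x, ∑ i, Set.indicator (A i) (fun _ => (lam i : ℝ≥0∞)) x ≤ f x),
    ∑ i, (lam i : ℝ≥0∞) * mu (A i)

/-- The pan-integral of `f` on a set `A`, i.e. the pan-integral of `f·χ_A` on `X`. -/
noncomputable def panIntegralOn [MeasurableSpace X] (mu : Set X → ℝ≥0∞) (f : X → ℝ≥0∞)
    (A : Set X) : ℝ≥0∞ :=
  panIntegral mu (A.indicator f)

/-- Subadditivity of a set function. -/
def PanSubadditive [MeasurableSpace X] (mu : Set X → ℝ≥0∞) : Prop :=
  ∀ ⦃A B : Set X⦄, MeasurableSet A → MeasurableSet B → mu (A ∪ B) ≤ mu A + mu B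

/-- Null-additivity of a set function. -/
def PanNullAdditive [MeasurableSpace X] (mu : Set X → ℝ≥0∞) : Prop :=
  ∀ ⦃A B : Set X⦄, MeasurableSet A → MeasurableSet B → mu B = 0 → mu (A ∪ B) = mu A

/-- Continuity from below of a set function. -/
def PanContinuousFromBelow [MeasurableSpace X] (mu : Set X → ℝ≥0∞) : Prop :=
  ∀ E : ℕ → Set X, (∀ n, MeasurableSet (E n)) → Monotone E →
    Filter.Tendsto (fun n => mu (E n)) Filter.atTop (nhds (mu (⋃ n, E n)))

/-- A real-valued function is pan-integrable if the pan-integrals of its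
positive and negative parts are both finite. -/
def PanIntegrable [MeasurableSpace X] (mu : Set X → ℝ≥0∞) (f : X → ℝ) : Prop :=
  panIntegral mu (fun x => ENNReal.ofReal (f x)) < ⊤ ∧
    panIntegral mu (fun x => ENNReal.ofReal (-f x)) < ⊤

/-- The symmetric pan-integral of a real-valued function:
`∫ f⁺ dμ − ∫ f⁻ dμ`. -/
noncomputable def panIntegralReal [MeasurableSpace X] (mu : Set X → ℝ≥0∞) (f : X → ℝ) : ℝ :=
  (panIntegral mu (fun x => ENNReal.ofReal (f x))).toReal -
    (panIntegral mu (fun x => ENNReal.ofReal (-f x))).toReal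

/-- The `‖·‖_{μ,p}` functional: `(∫_E^pan |f|^p dμ)^(1/p)`. -/
noncomputable def panNorm [MeasurableSpace X] (mu : Set X → ℝ≥0∞) (E : Set X) (p : ℝ)
    (f : X → ℝ) : ℝ≥0∞ :=
  (panIntegralOn mu (fun x => ENNReal.ofReal (|f x| ^ p)) E) ^ (1 / p)

/-!
As for the Lebesgue integral, Fatou's lemma follows from monotone convergence applied to the
increasing sequence `⨅ k ≥ m, f k`. For monotone convergence, take a simple minorant
`∑ λᵢ χ_{Aᵢ}` of `⨆ m, g m` and `c < 1`. The disjoint sets `Aᵢ ∩ {c λᵢ ≤ g m}` carry a simple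
minorant of `g m` (weight `0` on the rest of `X`) and increase to `Aᵢ` as `m → ∞`, so continuity
from below gives `c ∑ λᵢ μ(Aᵢ) ≤ ⨆ m, ∫ g m`.
-/

section

open Function

theorem le_of_sum_indicator_le {ι : Type*} [Fintype ι] {A : ι → Set X} {a : ι → ℝ≥0∞}
    {f : X → ℝ≥0∞} (hle : ∀ x, ∑ i, (A i).indicator (fun _ => a i) x ≤ f x)
    {i : ι} {x : X} (hx : x ∈ A i) : a i ≤ f x :=
  calc a i = (A i).indicator (fun _ => a i) x := (indicator_of_mem hx (fun _ => a i)).symm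
    _ ≤ ∑ j, (A j).indicator (fun _ => a j) x :=
      Finset.single_le_sum (f := fun j => (A j).indicator (fun _ => a j) x)
        (fun _ _ => zero_le) (Finset.mem_univ i)
    _ ≤ f x := hle x

theorem sum_indicator_le_of_pairwise_disjoint {ι : Type*} [Fintype ι] {B : ι → Set X}
    (hB : Pairwise (Disjoint on B)) {a : ι → ℝ≥0∞} {f : X → ℝ≥0∞}
    (hle : ∀ i, ∀ x ∈ B i, a i ≤ f x) (x : X) :
    ∑ i, (B i).indicator (fun _ => a i) x ≤ f x := by
  by_cases hx : ∃ i, x ∈ B i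
  · obtain ⟨i, hi⟩ := hx
    rw [Finset.sum_eq_single_of_mem i (Finset.mem_univ i) fun j _ hji =>
      indicator_of_notMem (fun hj => disjoint_left.1 (hB hji) hj hi) _, indicator_of_mem hi]
    exact hle i x hi
  · rw [Finset.sum_eq_zero fun i _ => indicator_of_notMem (fun hi => hx ⟨i, hi⟩) _]
    exact zero_le

theorem iUnion_inter_setOf_mul_le {g : ℕ → X → ℝ≥0∞} {A : Set X} {a c : ℝ≥0∞}
    (ha : a ≠ ⊤) (hc : c < 1) (hA : ∀ x ∈ A, a ≤ ⨆ m, g m x) :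
    ⋃ m, A ∩ {x | c * a ≤ g m x} = A := by
  refine (iUnion_subset fun _ => inter_subset_left).antisymm fun x hx => ?_
  rcases eq_or_ne a 0 with rfl | ha0
  · exact mem_iUnion.2 ⟨0, hx, by simp⟩
  have hca : c * a < ⨆ m, g m x :=
    calc c * a < 1 * a := ENNReal.mul_lt_mul_left ha0 ha hc
      _ = a := one_mul a
      _ ≤ ⨆ m, g m x := hA x hx
  obtain ⟨m, hm⟩ := lt_iSup_iff.1 hca
  exact mem_iUnion.2 ⟨m, hx, hm.le⟩

variable [MeasurableSpace X] {mu : Set X → ℝ≥0∞}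

theorem panIntegral_mono {f g : X → ℝ≥0∞} (hfg : f ≤ g) :
    panIntegral mu f ≤ panIntegral mu g :=
  iSup_mono fun _ => iSup_mono fun _ => iSup_mono fun _ => iSup_mono fun _ =>
    iSup_mono' fun hle => ⟨fun x => (hle x).trans (hfg x), le_rfl⟩

theorem sum_mul_le_panIntegral {f : X → ℝ≥0∞} {n : ℕ} {A : Fin n → Set X}
    (hA : IsPanPartition A) {lam : Fin n → ℝ≥0}
    (hle : ∀ x, ∑ i, (A i).indicator (fun _ => (lam i : ℝ≥0∞)) x ≤ f x) :
    ∑ i, (lam i : ℝ≥0∞) * mu (A i) ≤ panIntegral mu f :=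
  le_iSup_of_le n <| le_iSup_of_le A <| le_iSup_of_le hA <| le_iSup_of_le lam <|
    le_iSup_of_le hle le_rfl

theorem isPanPartition_snoc_compl {n : ℕ} {B : Fin n → Set X} (hBm : ∀ i, MeasurableSet (B i))
    (hBd : Pairwise (Disjoint on B)) :
    IsPanPartition (Fin.snoc B (⋃ i, B i)ᶜ : Fin (n + 1) → Set X) := by
  refine ⟨fun i => ?_, (pairwise_disjoint_on _).2 fun i j hij => ?_, ?_⟩
  · induction i using Fin.lastCases with
    | last => simpa using (MeasurableSet.iUnion hBm).compl
    | cast i => simpa using hBm i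
  · induction i using Fin.lastCases with
    | last => exact absurd hij (Fin.le_last j).not_gt
    | cast i =>
      induction j using Fin.lastCases with
      | last =>
        rw [Fin.snoc_last, Fin.snoc_castSucc]
        exact disjoint_compl_right_iff_subset.2 (subset_iUnion B i)
      | cast j => simpa using hBd (Fin.castSucc_lt_castSucc_iff.1 hij).ne
  · refine eq_univ_of_forall fun x => ?_
    by_cases hx : x ∈ ⋃ i, B i
    · obtain ⟨i, hi⟩ := mem_iUnion.1 hx
      exact mem_iUnion.2 ⟨i.castSucc, by simpa using hi⟩
    · exact mem_iUnion.2 ⟨Fin.last n, by simpa using hx⟩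

theorem sum_mul_le_panIntegral_of_pairwise_disjoint {f : X → ℝ≥0∞} {n : ℕ} {B : Fin n → Set X}
    (hBm : ∀ i, MeasurableSet (B i)) (hBd : Pairwise (Disjoint on B)) {lam : Fin n → ℝ≥0}
    (hle : ∀ i, ∀ x ∈ B i, (lam i : ℝ≥0∞) ≤ f x) :
    ∑ i, (lam i : ℝ≥0∞) * mu (B i) ≤ panIntegral mu f := by
  have hpart := isPanPartition_snoc_compl hBm hBd
  have hdom := sum_indicator_le_of_pairwise_disjoint hpart.2.1
    (a := fun i => ((Fin.snoc lam 0 : Fin (n + 1) → ℝ≥0) i : ℝ≥0∞)) (f := f) fun i => by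
      induction i using Fin.lastCases with
      | last => simp
      | cast i => simpa using hle i
  simpa [Fin.sum_univ_castSucc] using sum_mul_le_panIntegral (mu := mu) hpart hdom

theorem panIntegral_iSup (hcb : PanContinuousFromBelow mu) {g : ℕ → X → ℝ≥0∞}
    (hg : ∀ m, Measurable (g m)) (hmono : Monotone g) :
    panIntegral mu (fun x => ⨆ m, g m x) = ⨆ m, panIntegral mu (g m) := by
  refine le_antisymm ?_ (iSup_le fun m => panIntegral_mono fun x => le_iSup (g · x) m)
  refine iSup_le fun n => iSup_le fun A => iSup_le fun hA => iSup_le fun lam =>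
    iSup_le fun hle => ENNReal.le_of_forall_lt_one_mul_le fun c hc => ?_
  lift c to ℝ≥0 using ne_top_of_lt hc
  set B : Fin n → ℕ → Set X := fun i m => A i ∩ {x | (c : ℝ≥0∞) * lam i ≤ g m x}
  have hBm : ∀ i m, MeasurableSet (B i m) := fun i m =>
    (hA.1 i).inter (measurableSet_le measurable_const (hg m))
  have hBmono : ∀ i, Monotone (B i) := fun i m m' hmm' =>
    inter_subset_inter_right _ fun x hx => hx.trans (hmono hmm' x)
  have hBunion : ∀ i, ⋃ m, B i m = A i := fun i =>
    iUnion_inter_setOf_mul_le ENNReal.coe_ne_top hc fun x hx => le_of_sum_indicator_le hle hx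
  have hbound : ∀ m, ∑ i, ((c * lam i : ℝ≥0) : ℝ≥0∞) * mu (B i m) ≤ ⨆ m, panIntegral mu (g m) :=
    fun m => le_iSup_of_le m <| sum_mul_le_panIntegral_of_pairwise_disjoint (hBm · m)
      (fun i j hij => (hA.2.1 hij).mono inter_subset_left inter_subset_left)
      fun i x hx => by simpa using hx.2
  have hlim : Tendsto (fun m => ∑ i, ((c * lam i : ℝ≥0) : ℝ≥0∞) * mu (B i m)) atTop
      (𝓝 (∑ i, ((c * lam i : ℝ≥0) : ℝ≥0∞) * mu (A i))) :=
    tendsto_finsetSum _ fun i _ => by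
      simpa only [hBunion] using
        ENNReal.Tendsto.const_mul (hcb _ (hBm i) (hBmono i)) (Or.inr ENNReal.coe_ne_top)
  calc (c : ℝ≥0∞) * ∑ i, (lam i : ℝ≥0∞) * mu (A i)
      = ∑ i, ((c * lam i : ℝ≥0) : ℝ≥0∞) * mu (A i) := by
        simp only [Finset.mul_sum, ENNReal.coe_mul, mul_assoc]
    _ ≤ ⨆ m, panIntegral mu (g m) := le_of_tendsto' hlim hbound

theorem panIntegral_liminf_le (hcb : PanContinuousFromBelow mu) {f : ℕ → X → ℝ≥0∞}
    (hf : ∀ k, Measurable (f k)) :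
    panIntegral mu (fun x => liminf (fun k => f k x) atTop) ≤
      liminf (fun k => panIntegral mu (f k)) atTop :=
  calc panIntegral mu (fun x => liminf (fun k => f k x) atTop)
      = panIntegral mu (fun x => ⨆ m, ⨅ k ≥ m, f k x) := by
        simp only [liminf_eq_iSup_iInf_of_nat]
    _ = ⨆ m, panIntegral mu (fun x => ⨅ k ≥ m, f k x) :=
        panIntegral_iSup hcb (fun _ => .biInf _ (to_countable _) fun k _ => hf k)
          fun _ _ hmm' _ => iInf_le_iInf_of_subset fun _ hk => hmm'.trans hk
    _ ≤ ⨆ m, ⨅ k ≥ m, panIntegral mu (f k) :=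
        iSup_mono fun _ => le_iInf₂ fun k hk => panIntegral_mono fun x => iInf₂_le k hk
    _ = liminf (fun k => panIntegral mu (f k)) atTop := liminf_eq_iSup_iInf_of_nat.symm

end

theorem panIntegralOn_liminf_le_general [MeasurableSpace X]
    (mu : Set X → ℝ≥0∞) (hcb : PanContinuousFromBelow mu)
    {E : Set X} (hE : MeasurableSet E)
    (f : ℕ → X → ℝ≥0∞) (hf : ∀ k, Measurable (f k)) :
    panIntegralOn mu (fun x => Filter.liminf (fun k => f k x) Filter.atTop) E ≤
      Filter.liminf (fun k => panIntegralOn mu (f k) E) Filter.atTop := by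
  have hind : E.indicator (fun x => liminf (fun k => f k x) atTop) =
      fun x => liminf (fun k => E.indicator (f k) x) atTop := by
    ext x
    by_cases hx : x ∈ E <;> simp [hx]
  simpa only [panIntegralOn, hind] using panIntegral_liminf_le hcb fun k => (hf k).indicator hE

theorem panIntegralOn_liminf_le [MeasurableSpace X]
    (mu : Set X → ℝ≥0∞) (hmu : MonotoneMeasure mu) (hcb : PanContinuousFromBelow mu)
    {E : Set X} (hE : MeasurableSet E)
    (f : ℕ → X → ℝ≥0∞) (hf : ∀ k, Measurable (f k)) :
    panIntegralOn mu (fun x => Filter.liminf (fun k => f k x) Filter.atTop) E ≤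
      Filter.liminf (fun k => panIntegralOn mu (f k) E) Filter.atTop :=
  panIntegralOn_liminf_le_general mu hcb hE f hf
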